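/- arXiv:2511.13425 — 4 statements merged into one kernel-verified Lean document; each statement's English description precedes it below -/
import Mathlib

section
/- Let j_1, …, j_r be positive integers and let J be a positive integer dividing lcm(j_1, …, j_r). Then, as rational numbers, ∑_{p prime, p ∣ J} (p^{a_p} − 1/p^{a_p}) ≤ ∑_{i=1}^{r} (j_i − 1/j_i), where for each prime p dividing J, a_p denotes the exponent of p in the prime factorization of J. -/
/-!
Write `f x = x - x⁻¹`. For `x, y ≥ 1` one has
`f (x * y) - f x - f y = (x - 1) (y - 1) (1 - (x y)⁻¹) ≥ 0`, and `f` is increasing on `(0, ∞)`.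
Each prime power `p ^ a_p` exactly dividing `J` divides some `j_i`, since the exponent of `p`
in the lcm is the maximum of its exponents in the `j_i`. Assign each prime to such an index:
the prime powers assigned to `i` are pairwise coprime, so their product divides `j_i`, and
superadditivity followed by monotonicity bounds their contribution by `f (j_i)`.
-/

open Finset

lemma Nat.prod_pow_dvd_of_forall_pow_dvd {S : Finset ℕ} (hS : ∀ p ∈ S, p.Prime) (a : ℕ → ℕ)
    {n : ℕ} (h : ∀ p ∈ S, p ^ a p ∣ n) : ∏ p ∈ S, p ^ a p ∣ n := by
  rw [← Finset.lcm_eq_prod fun p hp q hq hpq => Nat.coprime_pow_primes _ _ (hS p hp) (hS q hq) hpq]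
  exact Finset.lcm_dvd h

lemma Nat.exists_pow_dvd_of_pow_dvd_finset_lcm {ι : Type*} {s : Finset ι} {f : ι → ℕ}
    (hf : ∀ i ∈ s, f i ≠ 0) {p a : ℕ} (hp : p.Prime) (ha : a ≠ 0) (h : p ^ a ∣ s.lcm f) :
    ∃ i ∈ s, p ^ a ∣ f i := by
  have hlcm : s.lcm f ≠ 0 := fun h0 => by
    obtain ⟨i, hi, hi0⟩ := Finset.lcm_eq_zero_iff.1 h0
    exact hf i hi hi0
  rw [hp.pow_dvd_iff_le_factorization hlcm, Finset.factorization_lcm hf,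
    Finset.le_sup_iff (Nat.pos_of_ne_zero ha)] at h
  obtain ⟨i, hi, hle⟩ := h
  exact ⟨i, hi, (hp.pow_dvd_iff_le_factorization (hf i hi)).2 hle⟩

section SubInv

variable {K : Type*} [Field K] [LinearOrder K] [IsStrictOrderedRing K]

lemma sub_inv_add_sub_inv_le_mul_sub_inv {x y : K} (hx : 1 ≤ x) (hy : 1 ≤ y) :
    (x - x⁻¹) + (y - y⁻¹) ≤ x * y - (x * y)⁻¹ := by
  have hx0 : x ≠ 0 := (zero_lt_one.trans_le hx).ne'
  have hy0 : y ≠ 0 := (zero_lt_one.trans_le hy).ne'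
  have key : x * y - (x * y)⁻¹ - ((x - x⁻¹) + (y - y⁻¹)) =
      (x - 1) * (y - 1) * (1 - (x * y)⁻¹) := by
    field_simp
    ring
  have hxy : (x * y)⁻¹ ≤ 1 := inv_le_one_of_one_le₀ (one_le_mul_of_one_le_of_one_le hx hy)
  have : 0 ≤ (x - 1) * (y - 1) * (1 - (x * y)⁻¹) :=
    mul_nonneg (mul_nonneg (sub_nonneg.2 hx) (sub_nonneg.2 hy)) (sub_nonneg.2 hxy)
  linarith

lemma sub_inv_le_sub_inv {x y : K} (hx : 0 < x) (hxy : x ≤ y) : x - x⁻¹ ≤ y - y⁻¹ :=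
  sub_le_sub hxy (inv_anti₀ hx hxy)

lemma Finset.sum_sub_inv_le_prod_sub_inv {ι : Type*} (s : Finset ι) {g : ι → K}
    (hg : ∀ i ∈ s, 1 ≤ g i) :
    ∑ i ∈ s, (g i - (g i)⁻¹) ≤ ∏ i ∈ s, g i - (∏ i ∈ s, g i)⁻¹ := by
  classical
  induction s using Finset.induction with
  | empty => simp
  | insert i s his ih =>
    rw [sum_insert his, prod_insert his]
    have hgi : 1 ≤ g i := hg i (mem_insert_self i s)
    have hs : ∀ k ∈ s, 1 ≤ g k := fun k hk => hg k (mem_insert_of_mem hk)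
    have := sub_inv_add_sub_inv_le_mul_sub_inv hgi (one_le_prod hs)
    linarith [ih hs]

lemma sum_prime_pow_sub_inv_le_of_dvd {S : Finset ℕ} (hS : ∀ p ∈ S, p.Prime) (a : ℕ → ℕ)
    {n : ℕ} (hn : 0 < n) (h : ∀ p ∈ S, p ^ a p ∣ n) :
    ∑ p ∈ S, ((p : K) ^ a p - ((p : K) ^ a p)⁻¹) ≤ (n : K) - (n : K)⁻¹ := by
  have hpow : ∀ p ∈ S, 1 ≤ (p : K) ^ a p := fun p hp =>
    one_le_pow₀ (by exact_mod_cast (hS p hp).one_lt.le)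
  have hprod : 1 ≤ ∏ p ∈ S, (p : K) ^ a p := one_le_prod hpow
  have hle : ((∏ p ∈ S, p ^ a p : ℕ) : K) ≤ n := by
    exact_mod_cast Nat.le_of_dvd hn (Nat.prod_pow_dvd_of_forall_pow_dvd hS a h)
  push_cast at hle
  calc ∑ p ∈ S, ((p : K) ^ a p - ((p : K) ^ a p)⁻¹)
      ≤ ∏ p ∈ S, (p : K) ^ a p - (∏ p ∈ S, (p : K) ^ a p)⁻¹ :=
        S.sum_sub_inv_le_prod_sub_inv hpow
    _ ≤ (n : K) - (n : K)⁻¹ := sub_inv_le_sub_inv (zero_lt_one.trans_le hprod) hle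

lemma sum_prime_pow_sub_inv_le_sum {ι : Type*} [Fintype ι] {S : Finset ℕ}
    (hS : ∀ p ∈ S, p.Prime) (a : ℕ → ℕ) {n : ι → ℕ} (hn : ∀ i, 0 < n i)
    (hdvd : ∀ p ∈ S, ∃ i, p ^ a p ∣ n i) :
    ∑ p ∈ S, ((p : K) ^ a p - ((p : K) ^ a p)⁻¹) ≤ ∑ i, ((n i : K) - (n i : K)⁻¹) := by
  classical
  rcases isEmpty_or_nonempty ι with hι | hι
  · obtain rfl : S = ∅ := eq_empty_of_forall_notMem fun p hp => isEmptyElim (hdvd p hp).choose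
    simp
  choose! g hg using hdvd
  rw [← sum_fiberwise S g]
  gcongr with i
  refine sum_prime_pow_sub_inv_le_of_dvd (fun p hp => hS p (mem_filter.1 hp).1) a (hn i) ?_
  intro p hp
  obtain ⟨hpS, rfl⟩ := mem_filter.1 hp
  exact hg p hpS

end SubInv

theorem prime_power_sum_le_sum_general (r : ℕ) (j : Fin r → ℕ) (hj : ∀ i, 0 < j i)
    (J : ℕ) (hdvd : J ∣ Finset.univ.lcm j) :
    ∑ p ∈ J.primeFactors,
        ((p : ℚ) ^ (J.factorization p) - 1 / (p : ℚ) ^ (J.factorization p)) ≤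
      ∑ i, ((j i : ℚ) - 1 / (j i : ℚ)) := by
  have hpow : ∀ p ∈ J.primeFactors, ∃ i, p ^ J.factorization p ∣ j i := fun p hp => by
    obtain ⟨i, -, hi⟩ := Nat.exists_pow_dvd_of_pow_dvd_finset_lcm (fun i _ => (hj i).ne')
      (Nat.prime_of_mem_primeFactors hp) (Finsupp.mem_support_iff.1 hp)
      ((Nat.ordProj_dvd J p).trans hdvd)
    exact ⟨i, hi⟩
  simpa only [one_div] using
    sum_prime_pow_sub_inv_le_sum (fun p hp => Nat.prime_of_mem_primeFactors hp) _ hj hpow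

theorem prime_power_sum_le_sum (r : ℕ) (j : Fin r → ℕ) (hj : ∀ i, 0 < j i)
    (J : ℕ) (hJ : 0 < J) (hdvd : J ∣ Finset.univ.lcm j) :
    ∑ p ∈ J.primeFactors,
        ((p : ℚ) ^ (J.factorization p) - 1 / (p : ℚ) ^ (J.factorization p)) ≤
      ∑ i, ((j i : ℚ) - 1 / (j i : ℚ)) :=
  prime_power_sum_le_sum_general r j hj J hdvd
end

section
/- Let q, J, d be positive integers with q > 22, J ∣ q, q² ∣ J·d, d even, d ≤ 70, and ∑_{p prime, p ∣ J} (p^{a_p} − 1/p^{a_p}) ≤ 24 − d/4 in the rational numbers, where a_p is the exponent of p in the prime factorization of J. Then q ∈ {24, 26, 28, 30, 36, 40, 42}. -/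
private lemma fact_eq {J p a : ℕ} (hp : p.Prime) (hJ0 : J ≠ 0)
    (h1 : p ^ a ∣ J) (h2 : ¬ p ^ (a + 1) ∣ J) : J.factorization p = a := by
  have ha := (Nat.Prime.pow_dvd_iff_le_factorization hp hJ0).mp h1
  have hb : ¬ (a + 1 ≤ J.factorization p) := fun h =>
    h2 ((Nat.Prime.pow_dvd_iff_le_factorization hp hJ0).mpr h)
  omega

private lemma sum_lb (J : ℕ) (S : Finset ℕ) (hS : S ⊆ J.primeFactors) :
    ∑ p ∈ S, ((p : ℚ) ^ (J.factorization p) - 1 / (p : ℚ) ^ (J.factorization p)) ≤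
    ∑ p ∈ J.primeFactors,
      ((p : ℚ) ^ (J.factorization p) - 1 / (p : ℚ) ^ (J.factorization p)) := by
  apply Finset.sum_le_sum_of_subset_of_nonneg hS
  intro p hp _
  have hp2 : 2 ≤ p := (Nat.prime_of_mem_primeFactors hp).two_le
  have hp1 : (1 : ℚ) ≤ (p : ℚ) := by exact_mod_cast Nat.one_le_of_lt (by omega : 1 < p)
  have h1 : (1 : ℚ) ≤ (p : ℚ) ^ (J.factorization p) := one_le_pow₀ hp1
  have h2 : 1 / (p : ℚ) ^ (J.factorization p) ≤ 1 := by
    rw [div_le_one (by linarith)]; exact h1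
  linarith

private lemma mem_pf {J p a : ℕ} (hp : p.Prime) (hJ0 : J ≠ 0) (ha : a ≠ 0)
    (h1 : p ^ a ∣ J) : p ∈ J.primeFactors :=
  Nat.mem_primeFactors.mpr ⟨hp, (dvd_pow_self p ha).trans h1, hJ0⟩

private lemma kill1 {J d D p a : ℕ} (hp : p.Prime) (hJ0 : J ≠ 0) (ha : a ≠ 0)
    (h1 : p ^ a ∣ J) (h2 : ¬ p ^ (a + 1) ∣ J) (hD : D ≤ d)
    (hlt : (24 : ℚ) - (D : ℚ) / 4 < (p : ℚ) ^ a - 1 / (p : ℚ) ^ a)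
    (hsum : ∑ r ∈ J.primeFactors,
        ((r : ℚ) ^ (J.factorization r) - 1 / (r : ℚ) ^ (J.factorization r)) ≤
      24 - (d : ℚ) / 4) : False := by
  have hf : J.factorization p = a := fact_eq hp hJ0 h1 h2
  have hle := sum_lb J {p} (by
    intro x hx
    simp only [Finset.mem_singleton] at hx
    subst hx
    exact mem_pf hp hJ0 ha h1)
  rw [Finset.sum_singleton, hf] at hle
  have hcast : (D : ℚ) ≤ (d : ℚ) := by exact_mod_cast hD
  linarith

private lemma kill2 {J d D p a r b : ℕ} (hp : p.Prime) (hr : r.Prime) (hpr : p ≠ r)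
    (hJ0 : J ≠ 0) (ha : a ≠ 0) (hb : b ≠ 0)
    (h1 : p ^ a ∣ J) (h2 : ¬ p ^ (a + 1) ∣ J)
    (h3 : r ^ b ∣ J) (h4 : ¬ r ^ (b + 1) ∣ J) (hD : D ≤ d)
    (hlt : (24 : ℚ) - (D : ℚ) / 4 <
      ((p : ℚ) ^ a - 1 / (p : ℚ) ^ a) + ((r : ℚ) ^ b - 1 / (r : ℚ) ^ b))
    (hsum : ∑ x ∈ J.primeFactors,
        ((x : ℚ) ^ (J.factorization x) - 1 / (x : ℚ) ^ (J.factorization x)) ≤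
      24 - (d : ℚ) / 4) : False := by
  have hfp : J.factorization p = a := fact_eq hp hJ0 h1 h2
  have hfr : J.factorization r = b := fact_eq hr hJ0 h3 h4
  have hle := sum_lb J {p, r} (by
    intro x hx
    simp only [Finset.mem_insert, Finset.mem_singleton] at hx
    rcases hx with hx | hx <;> subst hx
    · exact mem_pf hp hJ0 ha h1
    · exact mem_pf hr hJ0 hb h3)
  rw [Finset.sum_pair hpr, hfp, hfr] at hle
  have hcast : (D : ℚ) ≤ (d : ℚ) := by exact_mod_cast hD
  linarith

private lemma kill3 {J d D p a r b s c : ℕ} (hp : p.Prime) (hr : r.Prime) (hs : s.Prime)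
    (hpr : p ≠ r) (hps : p ≠ s) (hrs : r ≠ s)
    (hJ0 : J ≠ 0) (ha : a ≠ 0) (hb : b ≠ 0) (hc : c ≠ 0)
    (h1 : p ^ a ∣ J) (h2 : ¬ p ^ (a + 1) ∣ J)
    (h3 : r ^ b ∣ J) (h4 : ¬ r ^ (b + 1) ∣ J)
    (h5 : s ^ c ∣ J) (h6 : ¬ s ^ (c + 1) ∣ J) (hD : D ≤ d)
    (hlt : (24 : ℚ) - (D : ℚ) / 4 <
      ((p : ℚ) ^ a - 1 / (p : ℚ) ^ a) + ((r : ℚ) ^ b - 1 / (r : ℚ) ^ b)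
        + ((s : ℚ) ^ c - 1 / (s : ℚ) ^ c))
    (hsum : ∑ x ∈ J.primeFactors,
        ((x : ℚ) ^ (J.factorization x) - 1 / (x : ℚ) ^ (J.factorization x)) ≤
      24 - (d : ℚ) / 4) : False := by
  have hfp : J.factorization p = a := fact_eq hp hJ0 h1 h2
  have hfr : J.factorization r = b := fact_eq hr hJ0 h3 h4
  have hfs : J.factorization s = c := fact_eq hs hJ0 h5 h6
  have hle := sum_lb J {p, r, s} (by
    intro x hx
    simp only [Finset.mem_insert, Finset.mem_singleton] at hx
    rcases hx with hx | hx | hx <;> subst hx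
    · exact mem_pf hp hJ0 ha h1
    · exact mem_pf hr hJ0 hb h3
    · exact mem_pf hs hJ0 hc h5)
  rw [Finset.sum_insert (by simp [hpr, hps]), Finset.sum_pair hrs, hfp, hfr, hfs] at hle
  have hcast : (D : ℚ) ≤ (d : ℚ) := by exact_mod_cast hD
  linarith

theorem index_list (q J d : ℕ) (hq : 0 < q) (hJ : 0 < J) (hd : 0 < d)
    (h22 : 22 < q) (hdvd : J ∣ q) (hdvd2 : q ^ 2 ∣ J * d)
    (heven : Even d) (hle : d ≤ 70)
    (hsum : ∑ p ∈ J.primeFactors,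
        ((p : ℚ) ^ (J.factorization p) - 1 / (p : ℚ) ^ (J.factorization p)) ≤
      24 - (d : ℚ) / 4) :
    q ∈ ({24, 26, 28, 30, 36, 40, 42} : Finset ℕ) := by
  obtain ⟨w, hw⟩ := heven
  obtain ⟨k, hk⟩ := hdvd
  have hk0 : k ≠ 0 := by rintro rfl; simp at hk; omega
  have hdlb : J * k ^ 2 ∣ d := by
    have h : J * (J * k ^ 2) ∣ J * d := by
      have hqe : q ^ 2 = J * (J * k ^ 2) := by subst hk; ring
      rwa [hqe] at hdvd2
    exact (mul_dvd_mul_iff_left hJ.ne').mp h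
  have hDd : J * k ^ 2 ≤ d := Nat.le_of_dvd hd hdlb
  have hk2 : k ^ 2 ≤ 70 := by
    have h := Nat.le_mul_of_pos_left (k ^ 2) hJ
    omega
  have hk8 : k ≤ 8 := by
    by_contra h
    push_neg at h
    have h9 : 9 ^ 2 ≤ k ^ 2 := Nat.pow_le_pow_left (by omega) 2
    omega
  have hk1 : 1 ≤ k := by omega
  interval_cases k
  · -- k = 1
    rw [mul_one] at hk
    subst hk
    simp only [one_pow, mul_one] at hdlb hDd
    have hJ70 : q ≤ 70 := by omega
    interval_cases q
    · exact (kill1 (p := 23) (a := 1) (D := 46) (by norm_num) (by norm_num) (by norm_num) (by norm_num) (by norm_num) (by omega) (by norm_num) hsum).elim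
    · decide
    · exact (kill1 (p := 5) (a := 2) (D := 50) (by norm_num) (by norm_num) (by norm_num) (by norm_num) (by norm_num) (by omega) (by norm_num) hsum).elim
    · decide
    · exact (kill1 (p := 3) (a := 3) (D := 54) (by norm_num) (by norm_num) (by norm_num) (by norm_num) (by norm_num) (by omega) (by norm_num) hsum).elim
    · decide
    · exact (kill1 (p := 29) (a := 1) (D := 58) (by norm_num) (by norm_num) (by norm_num) (by norm_num) (by norm_num) (by omega) (by norm_num) hsum).elim
    · decide
    · exact (kill1 (p := 31) (a := 1) (D := 62) (by norm_num) (by norm_num) (by norm_num) (by norm_num) (by norm_num) (by omega) (by norm_num) hsum).elim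
    · exact (kill1 (p := 2) (a := 5) (D := 32) (by norm_num) (by norm_num) (by norm_num) (by norm_num) (by norm_num) (by omega) (by norm_num) hsum).elim
    · exact (kill1 (p := 11) (a := 1) (D := 66) (by norm_num) (by norm_num) (by norm_num) (by norm_num) (by norm_num) (by omega) (by norm_num) hsum).elim
    · exact (kill1 (p := 17) (a := 1) (D := 34) (by norm_num) (by norm_num) (by norm_num) (by norm_num) (by norm_num) (by omega) (by norm_num) hsum).elim
    · exact (kill1 (p := 7) (a := 1) (D := 70) (by norm_num) (by norm_num) (by norm_num) (by norm_num) (by norm_num) (by omega) (by norm_num) hsum).elim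
    · decide
    · exfalso; omega
    · exact (kill1 (p := 19) (a := 1) (D := 38) (by norm_num) (by norm_num) (by norm_num) (by norm_num) (by norm_num) (by omega) (by norm_num) hsum).elim
    · exfalso; omega
    · decide
    · exfalso; omega
    · decide
    · exfalso; omega
    · exact (kill2 (p := 11) (a := 1) (r := 2) (b := 2) (D := 44) (by norm_num) (by norm_num) (by norm_num) (by norm_num) (by norm_num) (by norm_num) (by norm_num) (by norm_num) (by norm_num) (by norm_num) (by omega) (by norm_num) hsum).elim
    · exfalso; omega
    · exact (kill1 (p := 23) (a := 1) (D := 46) (by norm_num) (by norm_num) (by norm_num) (by norm_num) (by norm_num) (by omega) (by norm_num) hsum).elim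
    · exfalso; omega
    · exact (kill1 (p := 2) (a := 4) (D := 48) (by norm_num) (by norm_num) (by norm_num) (by norm_num) (by norm_num) (by omega) (by norm_num) hsum).elim
    · exfalso; omega
    · exact (kill1 (p := 5) (a := 2) (D := 50) (by norm_num) (by norm_num) (by norm_num) (by norm_num) (by norm_num) (by omega) (by norm_num) hsum).elim
    · exfalso; omega
    · exact (kill1 (p := 13) (a := 1) (D := 52) (by norm_num) (by norm_num) (by norm_num) (by norm_num) (by norm_num) (by omega) (by norm_num) hsum).elim
    · exfalso; omega
    · exact (kill1 (p := 3) (a := 3) (D := 54) (by norm_num) (by norm_num) (by norm_num) (by norm_num) (by norm_num) (by omega) (by norm_num) hsum).elim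
    · exfalso; omega
    · exact (kill2 (p := 2) (a := 3) (r := 7) (b := 1) (D := 56) (by norm_num) (by norm_num) (by norm_num) (by norm_num) (by norm_num) (by norm_num) (by norm_num) (by norm_num) (by norm_num) (by norm_num) (by omega) (by norm_num) hsum).elim
    · exfalso; omega
    · exact (kill1 (p := 29) (a := 1) (D := 58) (by norm_num) (by norm_num) (by norm_num) (by norm_num) (by norm_num) (by omega) (by norm_num) hsum).elim
    · exfalso; omega
    · exact (kill3 (p := 5) (a := 1) (r := 2) (b := 2) (s := 3) (c := 1) (D := 60) (by norm_num) (by norm_num) (by norm_num) (by norm_num) (by norm_num) (by norm_num) (by norm_num) (by norm_num) (by norm_num) (by norm_num) (by norm_num) (by norm_num) (by norm_num) (by norm_num) (by norm_num) (by norm_num) (by omega) (by norm_num) hsum).elim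
    · exfalso; omega
    · exact (kill1 (p := 31) (a := 1) (D := 62) (by norm_num) (by norm_num) (by norm_num) (by norm_num) (by norm_num) (by omega) (by norm_num) hsum).elim
    · exfalso; omega
    · exact (kill1 (p := 2) (a := 6) (D := 64) (by norm_num) (by norm_num) (by norm_num) (by norm_num) (by norm_num) (by omega) (by norm_num) hsum).elim
    · exfalso; omega
    · exact (kill1 (p := 11) (a := 1) (D := 66) (by norm_num) (by norm_num) (by norm_num) (by norm_num) (by norm_num) (by omega) (by norm_num) hsum).elim
    · exfalso; omega
    · exact (kill1 (p := 17) (a := 1) (D := 68) (by norm_num) (by norm_num) (by norm_num) (by norm_num) (by norm_num) (by omega) (by norm_num) hsum).elim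
    · exfalso; omega
    · exact (kill1 (p := 7) (a := 1) (D := 70) (by norm_num) (by norm_num) (by norm_num) (by norm_num) (by norm_num) (by omega) (by norm_num) hsum).elim
  · -- k = 2
    subst hk
    simp only [show (2:ℕ) ^ 2 = 4 from rfl] at hdlb hDd
    have hlo : 12 ≤ J := by omega
    have hhi : J ≤ 17 := by omega
    interval_cases J
    · decide
    · decide
    · decide
    · decide
    · exact (kill1 (p := 2) (a := 4) (D := 64) (by norm_num) (by norm_num) (by norm_num) (by norm_num) (by norm_num) (by omega) (by norm_num) hsum).elim
    · exact (kill1 (p := 17) (a := 1) (D := 68) (by norm_num) (by norm_num) (by norm_num) (by norm_num) (by norm_num) (by omega) (by norm_num) hsum).elim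
  · exfalso; simp only [show (3:ℕ) ^ 2 = 9 from rfl] at hDd; omega
  · exfalso; simp only [show (4:ℕ) ^ 2 = 16 from rfl] at hDd; omega
  · exfalso; simp only [show (5:ℕ) ^ 2 = 25 from rfl] at hDd; omega
  · exfalso; simp only [show (6:ℕ) ^ 2 = 36 from rfl] at hDd; omega
  · exfalso; simp only [show (7:ℕ) ^ 2 = 49 from rfl] at hDd; omega
  · exfalso; simp only [show (8:ℕ) ^ 2 = 64 from rfl] at hDd; omega
end

section
/- For all integers x with 0 ≤ x < 5 and y with 0 ≤ y < 8, the rational number 25/80 − (r₁·(5 − r₁))/10 − (r₂·(8 − r₂))/16 is not an integer, where r₁ is the residue of 5x modulo 5 and r₂ is the residue of 5y modulo 8. -/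
/-!
The first residue is `5x mod 5 = 0`, so the expression is `(5 - r(8 - r))/16` with `r = 5y mod 8`.
Being an integer `n` would mean `(r - 4)² = 16n + 11`, but `11` is not a square modulo `8`.
-/

theorem ZMod.sq_ne_three_eight (a : ZMod 8) : a ^ 2 ≠ 3 := by
  revert a
  decide

theorem Int.sq_ne_eight_mul_add_three (a n : ℤ) : a ^ 2 ≠ 8 * n + 3 := by
  intro h
  apply ZMod.sq_ne_three_eight a
  have h8 := congrArg (fun z : ℤ => (z : ZMod 8)) h
  push_cast at h8
  rw [h8, show (8 : ZMod 8) = 0 from rfl, zero_mul, zero_add]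

theorem five_sub_mul_eight_sub_div_sixteen_ne_intCast (r n : ℤ) :
    (5 / 16 : ℚ) - r * (8 - r) / 16 ≠ n := by
  intro h
  have hint : (r - 4) ^ 2 = 8 * (2 * n + 1) + 3 := by
    have hq : ((r - 4) ^ 2 : ℚ) = 8 * (2 * n + 1) + 3 := by linear_combination (16 : ℚ) * h
    exact_mod_cast hq
  exact Int.sq_ne_eight_mul_add_three _ _ hint

theorem riemann_roch_fails_q40_general (x y : ℤ) :
    ¬ ∃ n : ℤ,
      (25 / 80 : ℚ) - (((5 * x) % 5 : ℤ) : ℚ) * (5 - (((5 * x) % 5 : ℤ) : ℚ)) / 10 -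
        (((5 * y) % 8 : ℤ) : ℚ) * (8 - (((5 * y) % 8 : ℤ) : ℚ)) / 16 = (n : ℤ) := by
  rintro ⟨n, hn⟩
  rw [Int.mul_emod_right] at hn
  apply five_sub_mul_eight_sub_div_sixteen_ne_intCast ((5 * y) % 8) n
  linear_combination hn

theorem riemann_roch_fails_q40 (x y : ℤ) (hx0 : 0 ≤ x) (hx : x < 5)
    (hy0 : 0 ≤ y) (hy : y < 8) :
    ¬ ∃ n : ℤ,
      (25 / 80 : ℚ) - (((5 * x) % 5 : ℤ) : ℚ) * (5 - (((5 * x) % 5 : ℤ) : ℚ)) / 10 -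
        (((5 * y) % 8 : ℤ) : ℚ) * (8 - (((5 * y) % 8 : ℤ) : ℚ)) / 16 = (n : ℤ) :=
  riemann_roch_fails_q40_general x y
end

section
/- Let S be a finite multiset of integers, each at least 2, such that 40 divides the least common multiple of the elements of S and ∑_{j ∈ S} (j − 1/j) ≤ 14 in the rational numbers. Then S is exactly the multiset {5, 8} (one element equal to 5 and one element equal to 8). -/
lemma pow_dvd_lcm2 {p k m n : ℕ} (hp : p.Prime) (hm : m ≠ 0) (hn : n ≠ 0)
    (h : p ^ k ∣ Nat.lcm m n) : p ^ k ∣ m ∨ p ^ k ∣ n := by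
  have hl : Nat.lcm m n ≠ 0 := Nat.lcm_ne_zero hm hn
  rw [Nat.Prime.pow_dvd_iff_le_factorization hp hl, Nat.factorization_lcm hm hn] at h
  simp only [Finsupp.sup_apply, le_sup_iff] at h
  rcases h with h | h
  · exact Or.inl ((Nat.Prime.pow_dvd_iff_le_factorization hp hm).mpr h)
  · exact Or.inr ((Nat.Prime.pow_dvd_iff_le_factorization hp hn).mpr h)

lemma mlcm_ne_zero (s : Multiset ℕ) (h : ∀ j ∈ s, j ≠ 0) : s.lcm ≠ 0 := by
  induction s using Multiset.induction with
  | empty => simp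
  | cons a t ih =>
    rw [Multiset.lcm_cons]
    exact Nat.lcm_ne_zero (h a (Multiset.mem_cons_self _ _))
      (ih fun j hj => h j (Multiset.mem_cons_of_mem hj))

lemma pow_dvd_lcm_exists {p k : ℕ} (hp : p.Prime) (hk : 0 < k) (S : Multiset ℕ)
    (h0 : ∀ j ∈ S, j ≠ 0) (h : p ^ k ∣ S.lcm) : ∃ a ∈ S, p ^ k ∣ a := by
  induction S using Multiset.induction with
  | empty =>
    simp only [Multiset.lcm_zero] at h
    have h1 : p ^ k ≤ 1 := Nat.le_of_dvd one_pos h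
    have h2 : 1 < p ^ k := Nat.one_lt_pow hk.ne' hp.one_lt
    omega
  | cons a s ih =>
    rw [Multiset.lcm_cons] at h
    have ha : a ≠ 0 := h0 a (Multiset.mem_cons_self _ _)
    have hs0 : ∀ j ∈ s, j ≠ 0 := fun j hj => h0 j (Multiset.mem_cons_of_mem hj)
    rcases pow_dvd_lcm2 hp ha (mlcm_ne_zero s hs0) h with h | h
    · exact ⟨a, Multiset.mem_cons_self _ _, h⟩
    · obtain ⟨b, hb, hbd⟩ := ih hs0 h
      exact ⟨b, Multiset.mem_cons_of_mem hb, hbd⟩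

lemma f_lb {j : ℕ} (hj : 2 ≤ j) : (3:ℚ)/2 ≤ (j : ℚ) - 1 / (j : ℚ) := by
  have h1 : (2:ℚ) ≤ (j:ℚ) := by exact_mod_cast hj
  have h2 : (0:ℚ) < (j:ℚ) := by linarith
  have h3 : 1 / (j:ℚ) ≤ 1/2 := by
    rw [div_le_div_iff₀ h2 (by norm_num)]; linarith
  linarith

lemma sum_f_nonneg (S : Multiset ℕ) (hS : ∀ j ∈ S, 2 ≤ j) :
    0 ≤ (S.map (fun j : ℕ => (j : ℚ) - 1 / (j : ℚ))).sum := by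
  apply Multiset.sum_nonneg
  intro x hx
  obtain ⟨j, hj, rfl⟩ := Multiset.mem_map.mp hx
  have := f_lb (hS j hj)
  linarith

theorem basket_q40 (S : Multiset ℕ) (hS : ∀ j ∈ S, 2 ≤ j)
    (hlcm : 40 ∣ S.lcm)
    (hsum : (S.map (fun j => (j : ℚ) - 1 / (j : ℚ))).sum ≤ 14) :
    S = ({5, 8} : Multiset ℕ) := by
  have hsum' : (S.map (fun j : ℕ => (j : ℚ) - 1 / (j : ℚ))).sum ≤ 14 := by
    refine le_of_eq_of_le ?_ hsum
    simp [Multiset.map_map]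
  clear hsum
  have h0 : ∀ j ∈ S, j ≠ 0 := fun j hj => by have := hS j hj; omega
  have h8 : (2:ℕ)^3 ∣ S.lcm := dvd_trans (by norm_num) hlcm
  have h5 : (5:ℕ)^1 ∣ S.lcm := dvd_trans (by norm_num) hlcm
  obtain ⟨a, haS, had⟩ := pow_dvd_lcm_exists (by norm_num) (by norm_num) S h0 h8
  obtain ⟨b, hbS, hbd⟩ := pow_dvd_lcm_exists (by norm_num) (by norm_num) S h0 h5
  rw [pow_one] at hbd
  have key : ∀ c ∈ S, ((c:ℚ) - 1/(c:ℚ)) ≤ 14 := by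
    intro c hc
    have hdc : S = c ::ₘ S.erase c := (Multiset.cons_erase hc).symm
    rw [hdc, Multiset.map_cons, Multiset.sum_cons] at hsum'
    have hrest := sum_f_nonneg (S.erase c) (fun j hj => hS j (Multiset.mem_of_mem_erase hj))
    linarith
  have hab : a ≠ b := by
    intro h
    subst h
    have h40 : 40 ∣ a := Nat.Coprime.mul_dvd_of_dvd_of_dvd (by norm_num) had hbd
    have ha40 : 40 ≤ a := Nat.le_of_dvd (by have := hS a haS; omega) h40
    have hk := key a haS
    have h2 : (0:ℚ) < (a:ℚ) := by have := hS a haS; positivity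
    have h3 : 1/(a:ℚ) ≤ 1 := by
      rw [div_le_one h2]; exact_mod_cast Nat.one_le_iff_ne_zero.mpr (h0 a haS)
    have : (40:ℚ) ≤ (a:ℚ) := by exact_mod_cast ha40
    linarith
  have hbS' : b ∈ S.erase a := (Multiset.mem_erase_of_ne hab.symm).mpr hbS
  set T := (S.erase a).erase b with hT
  have hdecomp : S = a ::ₘ b ::ₘ T := by
    rw [hT, Multiset.cons_erase hbS', Multiset.cons_erase haS]
  have hTS : ∀ j ∈ T, 2 ≤ j := fun j hj =>
    hS j (Multiset.mem_of_mem_erase (Multiset.mem_of_mem_erase hj))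
  rw [hdecomp, Multiset.map_cons, Multiset.map_cons, Multiset.sum_cons,
    Multiset.sum_cons] at hsum'
  have hTnn := sum_f_nonneg T hTS
  have ha8 : 8 ≤ a := Nat.le_of_dvd (by have := hS a haS; omega) (by exact_mod_cast had)
  have hb5 : 5 ≤ b := Nat.le_of_dvd (by have := hS b hbS; omega) hbd
  have haQ : (8:ℚ) ≤ (a:ℚ) := by exact_mod_cast ha8
  have hbQ : (5:ℚ) ≤ (b:ℚ) := by exact_mod_cast hb5
  have haP : (0:ℚ) < (a:ℚ) := by linarith
  have hbP : (0:ℚ) < (b:ℚ) := by linarith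
  have hainv : 1/(a:ℚ) ≤ 1/8 := by rw [div_le_div_iff₀ haP (by norm_num)]; linarith
  have hbinv : 1/(b:ℚ) ≤ 1/5 := by rw [div_le_div_iff₀ hbP (by norm_num)]; linarith
  have hainv0 : 0 < 1/(a:ℚ) := by positivity
  have hbinv0 : 0 < 1/(b:ℚ) := by positivity
  have haU : (a:ℚ) ≤ 10 := by linarith
  have hbU : (b:ℚ) ≤ 7 := by linarith
  have ha10 : a ≤ 10 := by exact_mod_cast haU
  have hb7 : b ≤ 7 := by exact_mod_cast hbU
  have had' : 8 ∣ a := by exact_mod_cast had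
  have ha' : a = 8 := by interval_cases a <;> omega
  have hb' : b = 5 := by interval_cases b <;> omega
  subst ha' hb'
  have e8 : ((8:ℕ):ℚ) - 1/((8:ℕ):ℚ) = 63/8 := by norm_num
  have e5 : ((5:ℕ):ℚ) - 1/((5:ℕ):ℚ) = 24/5 := by norm_num
  rw [e8, e5] at hsum'
  have hTe : T = 0 := by
    by_contra hne
    obtain ⟨c, hc⟩ := Multiset.exists_mem_of_ne_zero hne
    have hdc : T = c ::ₘ T.erase c := (Multiset.cons_erase hc).symm
    rw [hdc, Multiset.map_cons, Multiset.sum_cons] at hsum'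
    have hcf := f_lb (hTS c hc)
    have hrest := sum_f_nonneg (T.erase c) (fun j hj => hTS j (Multiset.mem_of_mem_erase hj))
    linarith
  rw [hdecomp, hTe, Multiset.cons_swap]
  rfl
end
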